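/- arXiv:1303.3679 — 3 statements merged into one kernel-verified Lean document; each statement's English description precedes it below -/
import Mathlib

section
/- Let T = (S, s_init, R, L) be a labeled transition system in which every state has an R-successor, let G_1, …, G_n be non-blocking generalized Büchi automata over Σ with rewards rew_1 ≥ … ≥ rew_n, let B be the weighted Büchi automaton constructed from them, and let P = T ⊗ B. Then the maximum of Rew(τ) over all traces τ of T exists, the maximum of C(ρ) over all accepting runs ρ of P exists, and the two maxima are equal; moreover, there is an accepting run ρ* of P in prefix-suffix structure attaining this common maximum, and α(ρ*) is a trace of T with Rew(α(ρ*)) maximal among all traces of T. -/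
/-! Common definitions: labeled transition systems, Büchi automata,
generalized Büchi automata, products, weighted runs, fragments, rewards. -/

/-- A labeled transition system `T = (S, s_init, R, L)`. -/
structure LTS (S : Type*) (A : Type*) where
  init : S
  trans : Set (S × S)
  label : S → A

namespace LTS

/-- An (infinite) trace of a transition system. -/
def IsTrace {S A : Type*} (T : LTS S A) (τ : ℕ → S) : Prop :=
  τ 0 = T.init ∧ ∀ i, (τ i, τ (i + 1)) ∈ T.trans

/-- The word produced by a trace. -/
def word {S A : Type*} (T : LTS S A) (τ : ℕ → S) : ℕ → A :=
  fun i => T.label (τ i)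

end LTS

/-- A Büchi automaton `(Q, q_init, Σ, δ, F)`. -/
structure BA (Q : Type*) (A : Type*) where
  init : Q
  trans : Set (Q × A × Q)
  acc : Set Q

namespace BA

/-- A run of a Büchi automaton over an infinite word. -/
def IsRun {Q A : Type*} (M : BA Q A) (w : ℕ → A) (ρ : ℕ → Q) : Prop :=
  ρ 0 = M.init ∧ ∀ i, (ρ i, w i, ρ (i + 1)) ∈ M.trans

/-- A run is accepting if it visits the accepting set infinitely often. -/
def IsAccepting {Q A : Type*} (M : BA Q A) (ρ : ℕ → Q) : Prop :=
  ∀ N, ∃ i, N ≤ i ∧ ρ i ∈ M.acc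

/-- The language of a Büchi automaton. -/
def Lang {Q A : Type*} (M : BA Q A) : Set (ℕ → A) :=
  {w | ∃ ρ, M.IsRun w ρ ∧ M.IsAccepting ρ}

/-- A Büchi automaton is non-blocking if every state has a successor on every letter. -/
def NonBlocking {Q A : Type*} (M : BA Q A) : Prop :=
  ∀ q σ, ∃ q', (q, σ, q') ∈ M.trans

end BA

/-- A generalized Büchi automaton with `m` acceptance sets `F_1, …, F_m`
(0-indexed as `acc 0, …, acc (m-1)`). -/
structure GBA (Q : Type*) (A : Type*) (m : ℕ) where
  init : Q
  trans : Set (Q × A × Q)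
  acc : Fin m → Set Q

namespace GBA

/-- A run of a generalized Büchi automaton over an infinite word. -/
def IsRun {Q A : Type*} {m : ℕ} (M : GBA Q A m) (w : ℕ → A) (ρ : ℕ → Q) : Prop :=
  ρ 0 = M.init ∧ ∀ i, (ρ i, w i, ρ (i + 1)) ∈ M.trans

/-- A run is accepting if it visits each acceptance set infinitely often. -/
def IsAccepting {Q A : Type*} {m : ℕ} (M : GBA Q A m) (ρ : ℕ → Q) : Prop :=
  ∀ l : Fin m, ∀ N, ∃ i, N ≤ i ∧ ρ i ∈ M.acc l

/-- The language of a generalized Büchi automaton. -/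
def Lang {Q A : Type*} {m : ℕ} (M : GBA Q A m) : Set (ℕ → A) :=
  {w | ∃ ρ, M.IsRun w ρ ∧ M.IsAccepting ρ}

/-- A GBA is non-blocking if every state has a successor on every letter. -/
def NonBlocking {Q A : Type*} {m : ℕ} (M : GBA Q A m) : Prop :=
  ∀ q σ, ∃ q', (q, σ, q') ∈ M.trans

end GBA

/-- Transitions of the product automaton `P = T ⊗ B`. -/
def ProdTrans {S A Q : Type*} (T : LTS S A) (M : BA Q A) : Set ((S × Q) × (S × Q)) :=
  {t | (t.1.1, t.2.1) ∈ T.trans ∧ (t.1.2, T.label t.1.1, t.2.2) ∈ M.trans}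

/-- Accepting states `F_P = S × F` of the product automaton. -/
def ProdAcc {S A Q : Type*} (_T : LTS S A) (M : BA Q A) : Set (S × Q) :=
  {p | p.2 ∈ M.acc}

/-- A run of the product automaton `P = T ⊗ B`. -/
def IsProdRun {S A Q : Type*} (T : LTS S A) (M : BA Q A) (ρ : ℕ → S × Q) : Prop :=
  ρ 0 = (T.init, M.init) ∧ ∀ i, (ρ i, ρ (i + 1)) ∈ ProdTrans T M

/-- An accepting run of the product automaton (visits `F_P` infinitely often). -/
def IsProdAccepting {S A Q : Type*} (T : LTS S A) (M : BA Q A) (ρ : ℕ → S × Q) : Prop :=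
  ∀ N, ∃ i, N ≤ i ∧ ρ i ∈ ProdAcc T M

/-- The weight of the `j`-th step of a sequence of product states, where `W` is the
weight function of the underlying weighted Büchi automaton:
`W_P(((s,q),(s',q'))) = W((q, L(s), q'))`. -/
def ProdStepW {S A Q : Type*} (T : LTS S A) (W : Q → A → Q → ℕ) (ρ : ℕ → S × Q)
    (j : ℕ) : ℕ :=
  W (ρ j).2 (T.label (ρ j).1) (ρ (j + 1)).2

/-- `ρ i … ρ k` is a fragment of the infinite run `ρ` (w.r.t. accepting set `F`):
both endpoints are accepting and no interior state is accepting. -/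
def IsFragment {X : Type*} (F : Set X) (ρ : ℕ → X) (i k : ℕ) : Prop :=
  i < k ∧ ρ i ∈ F ∧ ρ k ∈ F ∧ ∀ j, i < j → j < k → ρ j ∉ F

/-- Total weight of the segment from position `i` to position `k`, where `stepW j`
is the weight of the transition taken at position `j`. -/
def SegWeight (stepW : ℕ → ℕ) (i k : ℕ) : ℕ :=
  ∑ j ∈ Finset.Ico i k, stepW j

/-- The reward `C(ρ)` of the run `ρ` equals `c`: `c` is the maximum value that occurs
infinitely often in the sequence of fragment weights of `ρ`, i.e. fragments of weight `c`
occur infinitely often, and every value `v > c` occurs only finitely often. -/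
def RunRewardIs {X : Type*} (F : Set X) (ρ : ℕ → X) (stepW : ℕ → ℕ) (c : ℕ) : Prop :=
  (∀ N, ∃ i k, N ≤ i ∧ IsFragment F ρ i k ∧ SegWeight stepW i k = c) ∧
  (∀ v, c < v → ∃ N, ∀ i k, N ≤ i → IsFragment F ρ i k → SegWeight stepW i k ≠ v)

/-- A run is in prefix-suffix structure `ρ_pref · (ρ_suf)^ω` (with the first state
of `ρ_suf` accepting) iff it is eventually periodic with an accepting state at the
start of the periodic part. -/
def IsPrefixSuffix {X : Type*} (F : Set X) (ρ : ℕ → X) : Prop :=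
  ∃ l k, 0 < k ∧ ρ l ∈ F ∧ ∀ i, l ≤ i → ρ (i + k) = ρ i

/-- `f 0 f 1 … f k` is a finite path w.r.t. the edge relation `E`. -/
def IsFinPath {X : Type*} (E : Set (X × X)) (f : ℕ → X) (k : ℕ) : Prop :=
  ∀ t, t < k → (f t, f (t + 1)) ∈ E

/-- A fragment of a finite cycle `f 0 … f k`: a segment whose endpoints lie in `F` and
whose interior states do not. -/
def IsCycFrag {X : Type*} (F : Set X) (f : ℕ → X) (k i k' : ℕ) : Prop :=
  i < k' ∧ k' ≤ k ∧ f i ∈ F ∧ f k' ∈ F ∧ ∀ t, i < t → t < k' → f t ∉ F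

section Construction

/-- The component set `C = {(j,l) : 1 ≤ j ≤ n, 1 ≤ l ≤ m_j} ∪ {(0,0)}` of the weighted
Büchi automaton `B`; `none` plays the role of `(0,0)` and `some ⟨j,l⟩` (0-indexed) the
role of the component `(j+1, l+1)`. -/
abbrev BComp (n : ℕ) (m : Fin n → ℕ) : Type :=
  Option (Σ j : Fin n, Fin (m j))

variable {A : Type*} {n : ℕ} {Qs : Fin n → Type*} {m : Fin n → ℕ}

/-- The allowed moves between components of the weighted Büchi automaton `B`
(cases (1a), (1b), (2a), (2b), (2c), (2d)); `q` is the source tuple of GBA states. -/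
def CompStep (G : ∀ j, GBA (Qs j) A (m j)) (q : ∀ j, Qs j) :
    BComp n m → BComp n m → Prop
  | none, none => True
  | none, some jl' => (jl'.2 : ℕ) = 0
  | some jl, none => (jl.2 : ℕ) + 1 = m jl.1 ∧ q jl.1 ∈ (G jl.1).acc jl.2
  | some jl, some jl' =>
      (jl'.1 = jl.1 ∧ (jl'.2 : ℕ) = (jl.2 : ℕ) ∧ q jl.1 ∉ (G jl.1).acc jl.2) ∨
      (jl'.1 = jl.1 ∧ (jl'.2 : ℕ) = (jl.2 : ℕ) + 1 ∧ q jl.1 ∈ (G jl.1).acc jl.2) ∨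
      ((jl.1 : ℕ) < (jl'.1 : ℕ) ∧ (jl.2 : ℕ) + 1 = m jl.1 ∧ (jl'.2 : ℕ) = 0 ∧
        q jl.1 ∈ (G jl.1).acc jl.2)

/-- The weight of a transition of `B`, determined by the source and target components:
`rew j'` when newly entering the first component of layer `j'` (cases (1b), (2c)),
and `0` otherwise. -/
def CompWeight (rew : Fin n → ℕ) : BComp n m → BComp n m → ℕ
  | _, none => 0
  | c, some jl' => if (jl'.2 : ℕ) = 0 ∧ c ≠ some jl' then rew jl'.1 else 0

/-- The weighted Büchi automaton `B` built from the non-blocking GBAs `G 0, …, G (n-1)`: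
state set `Q_1 × … × Q_n × C`, initial state `(q_init,1, …, q_init,n, (0,0))`,
accepting set `Q_1 × … × Q_n × {(0,0)}`. -/
def BAut (G : ∀ j, GBA (Qs j) A (m j)) (_rew : Fin n → ℕ) :
    BA ((∀ j, Qs j) × BComp n m) A where
  init := (fun j => (G j).init, none)
  trans := {t | (∀ j, (t.1.1 j, t.2.1, t.2.2.1 j) ∈ (G j).trans) ∧
              CompStep G t.1.1 t.1.2 t.2.2.2}
  acc := {p | p.2 = none}

/-- The weight function `W : δ → ℕ` of the weighted Büchi automaton `B`. -/
def BWeight (rew : Fin n → ℕ) (p : (∀ j, Qs j) × BComp n m) (_ : A)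
    (p' : (∀ j, Qs j) × BComp n m) : ℕ :=
  CompWeight rew p.2 p'.2

open Classical in
/-- The reward of a trace `τ` of `T`: `Rew(τ) = Σ_{i, w(τ) ∈ L(G_i)} rew_i`. -/
noncomputable def TraceRew {S : Type*} (T : LTS S A) (G : ∀ j, GBA (Qs j) A (m j))
    (rew : Fin n → ℕ) (τ : ℕ → S) : ℕ :=
  ∑ j : Fin n, if T.word τ ∈ (G j).Lang then rew j else 0

end Construction

/-!
Between two visits of the accepting component `(0,0)`, the component of `B` climbs through the
layers of a strictly increasing sequence of GBAs and, in each layer, through all of its acceptance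
sets in turn; so a fragment weighs the sum of the rewards of the layers it visits. Soundness: some
set of layers recurs among the fragments of weight `C(ρ)`, so the projected word is accepted by
every GBA in it and `C(ρ) ≤ Rew(α(ρ))`. Completeness: along a trace `τ`, the component can visit
exactly the layers of the GBAs accepting `w(τ)`, so that every fragment weighs `Rew(τ)`. Finally a
run of the finite product with reward `c` can be pumped into a lasso repeating one of its late
fragments of weight `c`, which gives the optimal run in prefix-suffix structure.
-/

open Finset

theorem sum_image_Icc_eq_of_monotoneOn {β M : Type*} [PartialOrder β] [DecidableEq β]
    [AddCommMonoid M] (f : ℕ → β) (g : β → M) {a b : ℕ} (hab : a ≤ b)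
    (hf : MonotoneOn f (Set.Icc a b)) :
    ∑ x ∈ (Icc a b).image f, g x =
      g (f a) + ∑ s ∈ Ico a b, if f s = f (s + 1) then 0 else g (f (s + 1)) := by
  induction b, hab using Nat.le_induction with
  | base => simp
  | succ b hab ih =>
    rw [← insert_Icc_right_eq_Icc_add_one (by omega), image_insert, sum_Ico_succ_top hab,
      ← add_assoc, ← ih (hf.mono (Set.Icc_subset_Icc_right b.le_succ))]
    have hb : b ∈ Icc a b := mem_Icc.mpr ⟨hab, le_rfl⟩
    by_cases heq : f b = f (b + 1)
    · rw [if_pos heq, add_zero, insert_eq_of_mem (heq ▸ mem_image_of_mem f hb)]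
    · have hlt : f b < f (b + 1) :=
        (hf (by simp [hab]) (by simp; omega) b.le_succ).lt_of_ne heq
      have hnew : f (b + 1) ∉ (Icc a b).image f := by
        simp only [mem_image, mem_Icc, not_exists, not_and]
        intro s ⟨has, hsb⟩ hs
        refine (hf ⟨has, hsb.trans b.le_succ⟩ ⟨hab, b.le_succ⟩ hsb).not_gt ?_
        exact hs ▸ hlt
      rw [if_neg heq, sum_insert hnew, add_comm]

section Fragments

variable {X : Type*} {F : Set X} {ρ σ : ℕ → X}

def stepWeight (w : X → X → ℕ) (ρ : ℕ → X) (j : ℕ) : ℕ :=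
  w (ρ j) (ρ (j + 1))

theorem IsFragment.le_of_mem {i k j : ℕ} (h : IsFragment F ρ i k) (hij : i < j)
    (hj : ρ j ∈ F) : k ≤ j := by
  by_contra! hjk
  exact h.2.2.2 j hij hjk hj

theorem IsFragment.right_unique {i k k' : ℕ} (h : IsFragment F ρ i k)
    (h' : IsFragment F ρ i k') : k = k' :=
  le_antisymm (h.le_of_mem h'.1 h'.2.2.1) (h'.le_of_mem h.1 h.2.2.1)

theorem IsFragment.shift {i i' d : ℕ} (h : IsFragment F ρ i (i + d))
    (hσ : ∀ u ≤ d, σ (i' + u) = ρ (i + u)) : IsFragment F σ i' (i' + d) := by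
  obtain ⟨hd, hi, hk, hint⟩ := h
  have h0 := hσ 0 d.zero_le
  simp only [add_zero] at h0
  refine ⟨by omega, h0 ▸ hi, hσ d le_rfl ▸ hk, fun j h1 h2 => ?_⟩
  have hj := hσ (j - i') (by omega)
  rw [show i' + (j - i') = j by omega] at hj
  exact hj ▸ hint _ (by omega) (by omega)

theorem segWeight_stepWeight_shift (w : X → X → ℕ) {i i' d : ℕ}
    (hσ : ∀ u ≤ d, σ (i' + u) = ρ (i + u)) :
    SegWeight (stepWeight w σ) i' (i' + d) = SegWeight (stepWeight w ρ) i (i + d) := by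
  simp only [SegWeight, sum_Ico_eq_sum_range, Nat.add_sub_cancel_left]
  refine sum_congr rfl fun u hu => ?_
  have hu : u < d := mem_range.mp hu
  simp only [stepWeight, add_assoc, hσ u hu.le, hσ (u + 1) hu]

theorem RunRewardIs.exists_mem_ge {sw : ℕ → ℕ} {c : ℕ} (h : RunRewardIs F ρ sw c) (N : ℕ) :
    ∃ i, N ≤ i ∧ ρ i ∈ F := by
  obtain ⟨i, _, hN, hf, -⟩ := h.1 N
  exact ⟨i, hN, hf.2.1⟩

theorem RunRewardIs.eventually_le {sw : ℕ → ℕ} {c B : ℕ} (h : RunRewardIs F ρ sw c)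
    (hB : ∀ i k, IsFragment F ρ i k → SegWeight sw i k ≤ B) :
    ∃ N, ∀ i k, N ≤ i → IsFragment F ρ i k → SegWeight sw i k ≤ c := by
  have hv : ∀ v ∈ Ioc c B, ∀ᶠ N in Filter.atTop,
      ∀ i k, N ≤ i → IsFragment F ρ i k → SegWeight sw i k ≠ v := by
    intro v hv
    obtain ⟨N, hN⟩ := h.2 v (mem_Ioc.mp hv).1
    filter_upwards [Filter.eventually_ge_atTop N] with N' hN' i k hi
    exact hN i k (hN'.trans hi)
  obtain ⟨N, hN⟩ := Filter.eventually_atTop.mp ((Filter.eventually_all_finset _).mpr hv)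
  refine ⟨N, fun i k hi hf => ?_⟩
  by_contra! hc
  exact hN N le_rfl _ (mem_Ioc.mpr ⟨hc, hB i k hf⟩) i k hi hf rfl

end Fragments

section Lasso

def lassoIdx (a p t : ℕ) : ℕ :=
  if t < a then t else a + (t - a) % p

variable {a p : ℕ}

theorem lassoIdx_of_lt {t : ℕ} (h : t < a + p) : lassoIdx a p t = t := by
  unfold lassoIdx
  split_ifs
  · rfl
  · rw [Nat.mod_eq_of_lt (by omega)]; omega

theorem lassoIdx_lt (hp : 0 < p) (t : ℕ) : lassoIdx a p t < a + p := by
  unfold lassoIdx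
  split_ifs
  · omega
  · have := Nat.mod_lt (t - a) hp; omega

theorem le_lassoIdx {t : ℕ} (ht : a ≤ t) : a ≤ lassoIdx a p t := by
  simp [lassoIdx, Nat.not_lt.mpr ht]

theorem lassoIdx_add_mul (N : ℕ) : lassoIdx a p (a + N * p) = a := by
  simp [lassoIdx]

theorem lassoIdx_add_period {t : ℕ} (ht : a ≤ t) : lassoIdx a p (t + p) = lassoIdx a p t := by
  simp only [lassoIdx, Nat.not_lt.mpr ht, Nat.not_lt.mpr (ht.trans (t.le_add_right p)),
    if_false, show t + p - a = t - a + p by omega, Nat.add_mod_right]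

theorem lassoIdx_add {t u : ℕ} (ht : a ≤ t) :
    lassoIdx a p (t + u) = a + (lassoIdx a p t - a + u) % p := by
  simp only [lassoIdx, Nat.not_lt.mpr ht, Nat.not_lt.mpr (ht.trans (t.le_add_right u)),
    if_false, Nat.add_sub_cancel_left, Nat.mod_add_mod, show t + u - a = t - a + u by omega]

variable {X : Type*} {ρ : ℕ → X}

theorem lasso_add (hρ : ρ (a + p) = ρ a) {t u : ℕ} (ht : a ≤ t)
    (hu : lassoIdx a p t + u ≤ a + p) : ρ (lassoIdx a p (t + u)) = ρ (lassoIdx a p t + u) := by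
  have ha := le_lassoIdx (p := p) ht
  rw [lassoIdx_add ht]
  rcases hu.lt_or_eq with hu | hu
  · rw [Nat.mod_eq_of_lt (by omega)]; congr 1; omega
  · rw [show lassoIdx a p t - a + u = p by omega, Nat.mod_self, add_zero, hu, hρ]

theorem lasso_succ (hρ : ρ (a + p) = ρ a) (hp : 0 < p) (t : ℕ) :
    ρ (lassoIdx a p (t + 1)) = ρ (lassoIdx a p t + 1) := by
  rcases Nat.lt_or_ge t a with ht | ht
  · rw [lassoIdx_of_lt (by omega), lassoIdx_of_lt (by omega)]
  · exact lasso_add hρ ht (lassoIdx_lt hp t)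

theorem isPrefixSuffix_lasso {F : Set X} (hp : 0 < p)
    (ha : ρ a ∈ F) : IsPrefixSuffix F fun t => ρ (lassoIdx a p t) :=
  ⟨a, p, hp, by show ρ _ ∈ F; rwa [lassoIdx_of_lt (by omega)], fun _ hi => by
    simp only [lassoIdx_add_period hi]⟩

theorem IsFragment.of_lasso {F : Set X} (w : X → X → ℕ) (hρ : ρ (a + p) = ρ a) (hp : 0 < p)
    (hF : ρ a ∈ F) {i d : ℕ} (hi : a ≤ i)
    (hf : IsFragment F (fun t => ρ (lassoIdx a p t)) i (i + d)) :
    IsFragment F ρ (lassoIdx a p i) (lassoIdx a p i + d) ∧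
      SegWeight (stepWeight w fun t => ρ (lassoIdx a p t)) i (i + d) =
        SegWeight (stepWeight w ρ) (lassoIdx a p i) (lassoIdx a p i + d) := by
  have hi₀ := lassoIdx_lt (a := a) hp i
  have hd : lassoIdx a p i + d ≤ a + p := by
    have := hf.le_of_mem (j := i + (a + p - lassoIdx a p i)) (by omega) <| by
      rw [lasso_add hρ hi (by omega), show lassoIdx a p i + (a + p - lassoIdx a p i) = a + p by
        omega, hρ]
      exact hF
    omega
  have hσ : ∀ u ≤ d, ρ (lassoIdx a p i + u) = ρ (lassoIdx a p (i + u)) := fun u hu =>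
    (lasso_add hρ hi (by omega)).symm
  exact ⟨hf.shift hσ, (segWeight_stepWeight_shift w hσ).symm⟩

end Lasso

section Pumping

variable {X : Type*} [Finite X] {F : Set X} {w : X → X → ℕ} {ρ : ℕ → X}

/-- The loop `ρ a … ρ (a + p)` is cut between two starts of weight-`c` fragments that carry the
same state and lie beyond the last fragment heavier than `c`; repeating it forever keeps `C = c`. -/
theorem RunRewardIs.exists_lasso {c B : ℕ} (hc : RunRewardIs F ρ (stepWeight w ρ) c)
    (hB : ∀ i k, IsFragment F ρ i k → SegWeight (stepWeight w ρ) i k ≤ B) :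
    ∃ a p, 0 < p ∧ ρ a ∈ F ∧ ρ (a + p) = ρ a ∧
      RunRewardIs F (fun t => ρ (lassoIdx a p t)) (stepWeight w fun t => ρ (lassoIdx a p t)) c := by
  obtain ⟨N₀, hN₀⟩ := hc.eventually_le hB
  set starts := {i | N₀ ≤ i ∧ ∃ k, IsFragment F ρ i k ∧ SegWeight (stepWeight w ρ) i k = c}
  have hstarts : starts.Infinite := Set.infinite_of_forall_exists_gt fun N => by
    obtain ⟨i, k, hi, hf, hw⟩ := hc.1 (max N₀ (N + 1))
    exact ⟨i, ⟨le_of_max_le_left hi, k, hf, hw⟩, by omega⟩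
  obtain ⟨a, ⟨haN, ka, hfa, hwa⟩, b, ⟨-, kb, hfb, -⟩, hab, hρab⟩ :=
    hstarts.exists_lt_map_eq_of_mapsTo (Set.mapsTo_univ ρ _) Set.finite_univ
  obtain ⟨p, rfl⟩ : ∃ p, b = a + p := ⟨b - a, by omega⟩
  have hp : 0 < p := by omega
  have hρ : ρ (a + p) = ρ a := hρab.symm
  have hka : ka ≤ a + p := hfa.le_of_mem hab hfb.2.1
  obtain ⟨d, rfl⟩ : ∃ d, ka = a + d := ⟨ka - a, by have := hfa.1; omega⟩
  refine ⟨a, p, hp, hfa.2.1, hρ, fun N => ?_, fun v hv => ⟨a, fun i k hi hf => ?_⟩⟩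
  · have hσ : ∀ u ≤ d, ρ (lassoIdx a p (a + N * p + u)) = ρ (a + u) := fun u hu => by
      rw [lasso_add hρ (by omega) (by rw [lassoIdx_add_mul]; omega), lassoIdx_add_mul]
    refine ⟨a + N * p, a + N * p + d, ?_, hfa.shift hσ, ?_⟩
    · nlinarith
    · rw [segWeight_stepWeight_shift w hσ, hwa]
  · obtain ⟨d', rfl⟩ : ∃ d', k = i + d' := ⟨k - i, by have := hf.1; omega⟩
    obtain ⟨hf₀, hw₀⟩ := hf.of_lasso w hρ hp hfa.2.1 hi
    have := hN₀ _ _ (haN.trans (le_lassoIdx hi)) hf₀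
    omega

end Pumping

section Runs

variable {S A : Type*} (T : LTS S A)

theorem LTS.exists_isTrace (hsucc : ∀ s, ∃ s', (s, s') ∈ T.trans) :
    ∃ τ, T.IsTrace τ := by
  choose f hf using hsucc
  exact ⟨fun t => f^[t] T.init, rfl, fun i => by
    dsimp only
    rw [Function.iterate_succ_apply']
    exact hf _⟩

theorem GBA.exists_isRun {Q : Type*} {k : ℕ} {M : GBA Q A k} (h : M.NonBlocking) (w : ℕ → A) :
    ∃ r, M.IsRun w r := by
  choose f hf using h
  exact ⟨fun t => Nat.rec M.init (fun i q => f q (w i)) t, rfl, fun i => hf _ _⟩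

theorem IsProdRun.lasso {T : LTS S A} {Q : Type*} {M : BA Q A} {ρ : ℕ → S × Q} {a p : ℕ}
    (h : IsProdRun T M ρ) (hp : 0 < p) (hρ : ρ (a + p) = ρ a) :
    IsProdRun T M fun t => ρ (lassoIdx a p t) :=
  ⟨by dsimp only; rw [lassoIdx_of_lt (by omega)]; exact h.1,
    fun t => by dsimp only; rw [lasso_succ hρ hp]; exact h.2 _⟩

end Runs

section Layers

variable {A : Type*} {n : ℕ} {Qs : Fin n → Type*} {m : Fin n → ℕ}

/-- The GBA index of a component, with `⊥` for the accepting component `(0,0)`. -/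
def layer : BComp n m → WithBot (Fin n)
  | none => ⊥
  | some jl => jl.1

def layerRew (rew : Fin n → ℕ) : WithBot (Fin n) → ℕ
  | ⊥ => 0
  | (j : Fin n) => rew j

theorem layer_eq_coe_iff {c : BComp n m} {j : Fin n} :
    layer c = j ↔ ∃ l, c = some ⟨j, l⟩ := by
  rcases c with _ | ⟨j', l⟩
  · simp [layer]
  · simp only [layer, WithBot.coe_inj, Option.some.injEq]
    constructor
    · rintro rfl; exact ⟨l, rfl⟩
    · rintro ⟨l', h⟩; exact (Sigma.mk.inj_iff.mp h).1

variable {G : ∀ j, GBA (Qs j) A (m j)} {q : ∀ j, Qs j} {c c' : BComp n m}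

theorem layer_le_of_compStep (h : CompStep G q c c') (hc' : c' ≠ none) :
    layer c ≤ layer c' := by
  rcases c with _ | ⟨j, l⟩ <;> rcases c' with _ | ⟨j', l'⟩
  · exact absurd rfl hc'
  · exact bot_le
  · exact absurd rfl hc'
  · simp only [layer, WithBot.coe_le_coe]
    rcases h with ⟨rfl, -⟩ | ⟨rfl, -⟩ | ⟨h, -⟩
    exacts [le_rfl, le_rfl, h.le]

theorem level_eq_zero_of_compStep {j : Fin n} {l : Fin (m j)} (h : CompStep G q c (some ⟨j, l⟩))
    (hc : layer c ≠ j) : (l : ℕ) = 0 := by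
  rcases c with _ | ⟨j₀, l₀⟩
  · exact h
  · rcases h with ⟨rfl, -⟩ | ⟨rfl, -⟩ | ⟨-, -, h, -⟩
    exacts [absurd rfl hc, absurd rfl hc, h]

theorem compWeight_eq_of_compStep (rew : Fin n → ℕ) (h : CompStep G q c c') :
    CompWeight rew c c' = if layer c = layer c' then 0 else layerRew rew (layer c') := by
  rcases c' with _ | ⟨j', l'⟩
  · simp only [CompWeight, layerRew]
    split <;> rfl
  rcases c with _ | ⟨j, l⟩
  · simp [CompWeight, layer, layerRew, show (l' : ℕ) = 0 from h]
  rcases h with ⟨rfl, hl, -⟩ | ⟨rfl, hl, -⟩ | ⟨hj, -, hl, -⟩ <;> dsimp only at hl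
  · obtain rfl : l' = l := Fin.ext hl
    simp [CompWeight]
  · simp [CompWeight, layer, hl]
  · have hne : j ≠ j' := (Fin.lt_def.mpr hj).ne
    simp [CompWeight, layer, layerRew, hl, hne]

end Layers

section ComponentFragments

variable {A : Type*} {n : ℕ} {Qs : Fin n → Type*} {m : Fin n → ℕ}
  {G : ∀ j, GBA (Qs j) A (m j)} {q : ℕ → ∀ j, Qs j} {c : ℕ → BComp n m}

theorem segWeight_compWeight_eq (rew : Fin n → ℕ)
    (hstep : ∀ s, CompStep G (q s) (c s) (c (s + 1))) {i k : ℕ} (hf : IsFragment {none} c i k) :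
    SegWeight (fun s => CompWeight rew (c s) (c (s + 1))) i k =
      ∑ x ∈ (Ico i k).image (fun s => layer (c s)), layerRew rew x := by
  obtain ⟨hik, hi, hk, hint⟩ := hf
  obtain ⟨b, rfl⟩ : ∃ b, k = b + 1 := ⟨k - 1, by omega⟩
  have hmono : MonotoneOn (fun s => layer (c s)) (Set.Icc i b) :=
    monotoneOn_of_le_succ Set.ordConnected_Icc fun s _ hs hs' => by
      simp only [Order.succ_eq_add_one, Set.mem_Icc] at hs hs' ⊢
      exact layer_le_of_compStep (hstep s) (hint _ (by omega) (by omega))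
  rw [Ico_add_one_right_eq_Icc, sum_image_Icc_eq_of_monotoneOn _ _ (by omega) hmono,
    SegWeight, sum_Ico_succ_top (by omega), Set.mem_singleton_iff.mp hi,
    Set.mem_singleton_iff.mp hk]
  simp only [CompWeight, add_zero, layer, layerRew, zero_add]
  exact sum_congr rfl fun s _ => compWeight_eq_of_compStep rew (hstep s)

theorem exists_acc_of_compStep (hstep : ∀ s, CompStep G (q s) (c s) (c (s + 1))) {t k : ℕ}
    (hk : c k = none) (htk : t ≤ k) {j : Fin n} {l : Fin (m j)} (hc : c t = some ⟨j, l⟩)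
    (l' : Fin (m j)) (hl : l ≤ l') : ∃ s, t ≤ s ∧ s < k ∧ q s j ∈ (G j).acc l' := by
  obtain ⟨d, rfl⟩ : ∃ d, k = t + d := ⟨k - t, by omega⟩
  induction d generalizing t l with
  | zero => simp [hc] at hk
  | succ d ih =>
    have hlast : (l : ℕ) + 1 = m j → l' = l := fun h => Fin.ext (by omega)
    have h := hstep t
    rw [hc] at h
    rcases hnext : c (t + 1) with _ | ⟨j₁, l₁⟩ <;> rw [hnext] at h <;> dsimp only [CompStep] at h
    · obtain rfl := hlast h.1
      exact ⟨t, le_rfl, by omega, h.2⟩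
    · have ih' : ∀ {l₁ : Fin (m j)}, c (t + 1) = some ⟨j, l₁⟩ → l₁ ≤ l' →
          ∃ s, t ≤ s ∧ s < t + (d + 1) ∧ q s j ∈ (G j).acc l' := fun h₁ hl₁ => by
        obtain ⟨s, hs, hs', hacc⟩ :=
          ih h₁ hl₁ (by rwa [show t + 1 + d = t + (d + 1) by omega]) (by omega)
        exact ⟨s, by omega, by omega, hacc⟩
      rcases h with ⟨rfl, hl₁, -⟩ | ⟨rfl, hl₁, hacc⟩ | ⟨-, hend, -, hacc⟩
      · obtain rfl : l₁ = l := Fin.ext hl₁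
        exact ih' hnext hl
      · rcases hl.lt_or_eq with hl | rfl
        · exact ih' hnext (Fin.le_def.mpr (by rw [hl₁]; exact hl))
        · exact ⟨t, le_rfl, by omega, hacc⟩
      · obtain rfl := hlast hend
        exact ⟨t, le_rfl, by omega, hacc⟩

theorem exists_level_zero_of_compStep (hstep : ∀ s, CompStep G (q s) (c s) (c (s + 1)))
    {i s : ℕ} (hi : c i = none) (his : i ≤ s) {j : Fin n} {l : Fin (m j)}
    (hc : c s = some ⟨j, l⟩) : ∃ s₀ l₀, i ≤ s₀ ∧ s₀ ≤ s ∧ c s₀ = some ⟨j, l₀⟩ ∧ (l₀ : ℕ) = 0 := by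
  induction s, his using Nat.le_induction generalizing l with
  | base => simp [hi] at hc
  | succ s his ih =>
    by_cases hprev : layer (c s) = j
    · obtain ⟨l₁, h₁⟩ := layer_eq_coe_iff.mp hprev
      obtain ⟨s₀, l₀, h⟩ := ih h₁
      exact ⟨s₀, l₀, h.1, by omega, h.2.2⟩
    · exact ⟨s + 1, l, by omega, le_rfl, hc,
        level_eq_zero_of_compStep (hc ▸ hstep s) hprev⟩

theorem exists_acc_of_mem_layers (hstep : ∀ s, CompStep G (q s) (c s) (c (s + 1)))
    {i k : ℕ} (hf : IsFragment {none} c i k) {j : Fin n}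
    (hj : (j : WithBot (Fin n)) ∈ (Ico i k).image (fun s => layer (c s))) (l : Fin (m j)) :
    ∃ s, i ≤ s ∧ s < k ∧ q s j ∈ (G j).acc l := by
  obtain ⟨s, hs, hsj⟩ := mem_image.mp hj
  obtain ⟨l₁, h₁⟩ := layer_eq_coe_iff.mp hsj
  obtain ⟨s₀, l₀, his₀, hs₀, h₀, hl₀⟩ :=
    exists_level_zero_of_compStep hstep hf.2.1 (mem_Ico.mp hs).1 h₁
  obtain ⟨t, ht, htk, hacc⟩ := exists_acc_of_compStep hstep hf.2.2.1
    (by have := mem_Ico.mp hs; omega) h₀ l (Fin.le_def.mpr (by omega))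
  exact ⟨t, by omega, htk, hacc⟩

end ComponentFragments

section LayerSums

variable {n : ℕ} (rew : Fin n → ℕ)

theorem sum_layerRew_insert_bot (J : Finset (Fin n)) :
    ∑ x ∈ insert ⊥ (J.image (↑)), layerRew rew x = ∑ j ∈ J, rew j := by
  rw [sum_insert (by simp), sum_image (fun _ _ _ _ h => WithBot.coe_injective h)]
  exact zero_add _

theorem sum_layerRew_le {V : Finset (WithBot (Fin n))} {J : Finset (Fin n)}
    (h : ∀ j : Fin n, (j : WithBot (Fin n)) ∈ V → j ∈ J) :
    ∑ x ∈ V, layerRew rew x ≤ ∑ j ∈ J, rew j := by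
  rw [← sum_layerRew_insert_bot]
  refine sum_le_sum_of_subset fun x hx => ?_
  induction x with
  | bot => exact mem_insert_self _ _
  | coe j => exact mem_insert_of_mem (mem_image_of_mem _ (h j hx))

end LayerSums

section TraceReward

variable {S A : Type*} {n : ℕ} {Qs : Fin n → Type*} {m : Fin n → ℕ} (T : LTS S A)
  (G : ∀ j, GBA (Qs j) A (m j)) (rew : Fin n → ℕ)

open Classical in
theorem traceRew_eq_sum_filter (τ : ℕ → S) :
    TraceRew T G rew τ = ∑ j ∈ univ.filter (fun j => T.word τ ∈ (G j).Lang), rew j := by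
  rw [TraceRew, sum_filter]

theorem traceRew_le_sum (τ : ℕ → S) : TraceRew T G rew τ ≤ ∑ j, rew j := by
  classical
  rw [traceRew_eq_sum_filter]
  exact sum_le_sum_of_subset (filter_subset _ _)

theorem LTS.exists_isTrace_forall_traceRew_le (hsucc : ∀ s, ∃ s', (s, s') ∈ T.trans) :
    ∃ τ, T.IsTrace τ ∧ ∀ τ', T.IsTrace τ' → TraceRew T G rew τ' ≤ TraceRew T G rew τ := by
  obtain ⟨τ₀, hτ₀⟩ := T.exists_isTrace hsucc
  set V := {v | ∃ τ, T.IsTrace τ ∧ TraceRew T G rew τ = v}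
  have hV : BddAbove V := ⟨∑ j, rew j, by rintro _ ⟨τ, -, rfl⟩; exact traceRew_le_sum T G rew τ⟩
  obtain ⟨τ, hτ, hτV⟩ := Nat.sSup_mem (s := V) ⟨_, τ₀, hτ₀, rfl⟩ hV
  exact ⟨τ, hτ, fun τ' hτ' => hτV ▸ le_csSup hV ⟨τ', hτ', rfl⟩⟩

end TraceReward

section ProductRuns

variable {S A : Type*} {n : ℕ} {Qs : Fin n → Type*} {m : Fin n → ℕ} {T : LTS S A}
  {G : ∀ j, GBA (Qs j) A (m j)} {rew : Fin n → ℕ} {ρ : ℕ → S × ((∀ j, Qs j) × BComp n m)}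

theorem IsProdRun.isTrace (h : IsProdRun T (BAut G rew) ρ) : T.IsTrace fun i => (ρ i).1 :=
  ⟨congrArg Prod.fst h.1, fun i => (h.2 i).1⟩

theorem IsProdRun.isRun (h : IsProdRun T (BAut G rew) ρ) (j : Fin n) :
    (G j).IsRun (T.word fun i => (ρ i).1) fun i => (ρ i).2.1 j :=
  ⟨congrArg (fun p => p.2.1 j) h.1, fun i => (h.2 i).2.1 j⟩

theorem IsProdRun.compStep (h : IsProdRun T (BAut G rew) ρ) (s : ℕ) :
    CompStep G (ρ s).2.1 (ρ s).2.2 (ρ (s + 1)).2.2 :=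
  (h.2 s).2.2

theorem IsProdRun.segWeight_eq (h : IsProdRun T (BAut G rew) ρ) {i k : ℕ}
    (hf : IsFragment (ProdAcc T (BAut G rew)) ρ i k) :
    SegWeight (ProdStepW T (BWeight rew) ρ) i k =
      ∑ x ∈ (Ico i k).image (fun s => layer (ρ s).2.2), layerRew rew x :=
  segWeight_compWeight_eq rew h.compStep hf

theorem IsProdRun.segWeight_le (h : IsProdRun T (BAut G rew) ρ) {i k : ℕ}
    (hf : IsFragment (ProdAcc T (BAut G rew)) ρ i k) :
    SegWeight (ProdStepW T (BWeight rew) ρ) i k ≤ ∑ j, rew j :=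
  h.segWeight_eq hf ▸ sum_layerRew_le rew fun j _ => mem_univ j

theorem IsProdRun.le_traceRew (h : IsProdRun T (BAut G rew) ρ) {c : ℕ}
    (hc : RunRewardIs (ProdAcc T (BAut G rew)) ρ (ProdStepW T (BWeight rew) ρ) c) :
    c ≤ TraceRew T G rew fun i => (ρ i).1 := by
  classical
  set P : ℕ → Finset (WithBot (Fin n)) → Prop := fun N V => ∃ i k, N ≤ i ∧
    IsFragment (ProdAcc T (BAut G rew)) ρ i k ∧ SegWeight (ProdStepW T (BWeight rew) ρ) i k = c ∧
    (Ico i k).image (fun s => layer (ρ s).2.2) = V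
  obtain ⟨V, hfreq⟩ : ∃ V, ∃ᶠ N in Filter.atTop, P N V :=
    Filter.frequently_exists.mp <| Filter.Frequently.of_forall fun N => by
      obtain ⟨i, k, h⟩ := hc.1 N
      exact ⟨_, i, k, h.1, h.2.1, h.2.2, rfl⟩
  have hV : ∀ N, P N V := fun N => by
    obtain ⟨N', hN', i, k, hi, h⟩ := Filter.frequently_atTop.mp hfreq N
    exact ⟨i, k, hN'.trans hi, h⟩
  have hacc : ∀ j : Fin n, (j : WithBot (Fin n)) ∈ V → T.word (fun i => (ρ i).1) ∈ (G j).Lang :=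
    fun j hj => ⟨_, h.isRun j, fun l N => by
      obtain ⟨i, k, hi, hf, -, rfl⟩ := hV N
      obtain ⟨s, hs, -, hs'⟩ := exists_acc_of_mem_layers h.compStep hf hj l
      exact ⟨s, hi.trans hs, hs'⟩⟩
  obtain ⟨i, k, -, hf, rfl, rfl⟩ := hV 0
  rw [h.segWeight_eq hf, traceRew_eq_sum_filter]
  exact sum_layerRew_le rew fun j hj => mem_filter.mpr ⟨mem_univ j, hacc j hj⟩

theorem IsProdRun.exists_prefixSuffix [Finite S] [∀ j, Finite (Qs j)]
    (h : IsProdRun T (BAut G rew) ρ) {c : ℕ}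
    (hc : RunRewardIs (ProdAcc T (BAut G rew)) ρ (ProdStepW T (BWeight rew) ρ) c) :
    ∃ ρ', IsProdRun T (BAut G rew) ρ' ∧ IsPrefixSuffix (ProdAcc T (BAut G rew)) ρ' ∧
      RunRewardIs (ProdAcc T (BAut G rew)) ρ' (ProdStepW T (BWeight rew) ρ') c := by
  obtain ⟨a, p, hp, ha, hρp, hc'⟩ := hc.exists_lasso
    (w := fun (x y : S × ((∀ j, Qs j) × BComp n m)) => BWeight rew x.2 (T.label x.1) y.2)
    fun _ _ => h.segWeight_le
  exact ⟨_, h.lasso hp hρp, isPrefixSuffix_lasso hp ha, hc'⟩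

end ProductRuns

section Schedule

variable {A : Type*} {n : ℕ} {Qs : Fin n → Type*} {m : Fin n → ℕ}
  (G : ∀ j, GBA (Qs j) A (m j)) (hm : ∀ j, 0 < m j) (J : Finset (Fin n))

def entryAbove (x : WithBot (Fin n)) : BComp n m :=
  if h : (J.filter fun j : Fin n => x < j).Nonempty then
    some ⟨(J.filter fun j : Fin n => x < j).min' h, ⟨0, hm _⟩⟩
  else none

open Classical in
/-- Drives the component of `B` through the layers of `J` in increasing order: component `(j, l)`
is left once `G j` visits its `l`-th acceptance set. -/
noncomputable def schedStep (qt : ∀ j, Qs j) : BComp n m → BComp n m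
  | none => entryAbove hm J ⊥
  | some ⟨j, l⟩ =>
      if qt j ∈ (G j).acc l then
        if h : (l : ℕ) + 1 < m j then some ⟨j, ⟨l + 1, h⟩⟩ else entryAbove hm J j
      else some ⟨j, l⟩

noncomputable def schedule (q : ℕ → ∀ j, Qs j) : ℕ → BComp n m
  | 0 => none
  | t + 1 => schedStep G hm J (q t) (schedule q t)

variable {G hm J}

theorem entryAbove_eq (x : WithBot (Fin n)) :
    (entryAbove hm J x = none ∧ ∀ j ∈ J, ¬x < j) ∨
      ∃ j ∈ J, x < j ∧ (∀ j' ∈ J, x < j' → j ≤ j') ∧ entryAbove hm J x = some ⟨j, ⟨0, hm j⟩⟩ := by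
  unfold entryAbove
  split_ifs with h
  · obtain ⟨hJ, hx⟩ := mem_filter.mp (min'_mem _ h)
    exact Or.inr ⟨_, hJ, hx, fun j' hj' hxj' => min'_le _ _ (mem_filter.mpr ⟨hj', hxj'⟩), rfl⟩
  · exact Or.inl ⟨rfl, fun j hj hxj => h ⟨j, mem_filter.mpr ⟨hj, hxj⟩⟩⟩

theorem compStep_schedStep (qt : ∀ j, Qs j) (c : BComp n m) :
    CompStep G qt c (schedStep G hm J qt c) := by
  rcases c with _ | ⟨j, l⟩
  · rcases entryAbove_eq (hm := hm) (J := J) ⊥ with ⟨he, -⟩ | ⟨j', -, -, -, he⟩ <;>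
      simp only [schedStep, he, CompStep]
  · simp only [schedStep]
    split_ifs with hacc hl
    · exact Or.inr (Or.inl ⟨rfl, rfl, hacc⟩)
    · have hlast : (l : ℕ) + 1 = m j := by omega
      rcases entryAbove_eq (hm := hm) (J := J) j with ⟨he, -⟩ | ⟨j', -, hj', -, he⟩ <;>
        rw [he]
      · exact ⟨hlast, hacc⟩
      · exact Or.inr (Or.inr ⟨Fin.lt_def.mp (WithBot.coe_lt_coe.mp hj'), hlast, rfl, hacc⟩)
    · exact Or.inl ⟨rfl, rfl, hacc⟩

variable {q : ℕ → ∀ j, Qs j}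

theorem schedule_succ (t : ℕ) :
    schedule G hm J q (t + 1) = schedStep G hm J (q t) (schedule G hm J q t) := rfl

theorem schedule_stay {t s : ℕ} {j : Fin n} {l : Fin (m j)}
    (ht : schedule G hm J q t = some ⟨j, l⟩) (hts : t ≤ s)
    (hwait : ∀ u, t ≤ u → u < s → q u j ∉ (G j).acc l) :
    schedule G hm J q s = some ⟨j, l⟩ := by
  induction s, hts using Nat.le_induction with
  | base => exact ht
  | succ s hts ih =>
    rw [schedule_succ, ih fun u h1 h2 => hwait u h1 (by omega), schedStep,
      if_neg (hwait s hts (by omega))]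

theorem image_layer_schedule_wait {j : Fin n} {l : Fin (m j)} {t : ℕ}
    (hacc : ∀ N, ∃ s, N ≤ s ∧ q s j ∈ (G j).acc l) (ht : schedule G hm J q t = some ⟨j, l⟩) :
    ∃ s, t ≤ s ∧ (Ico t (s + 1)).image (fun u => layer (schedule G hm J q u)) = {(j : WithBot _)} ∧
      q s j ∈ (G j).acc l ∧ schedule G hm J q s = some ⟨j, l⟩ := by
  classical
  have hex := hacc t
  have hstay : ∀ u, t ≤ u → u ≤ Nat.find hex → schedule G hm J q u = some ⟨j, l⟩ :=
    fun u htu hu => schedule_stay ht htu fun u' h1 h2 h => Nat.find_min hex (by omega) ⟨h1, h⟩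
  refine ⟨Nat.find hex, (Nat.find_spec hex).1, ?_, (Nat.find_spec hex).2,
    hstay _ (Nat.find_spec hex).1 le_rfl⟩
  rw [image_congr (g := fun _ => (j : WithBot (Fin n))) fun u hu => ?_,
    image_const ⟨t, mem_Ico.mpr ⟨le_rfl, by have := (Nat.find_spec hex).1; omega⟩⟩]
  have hu := mem_Ico.mp hu
  exact layer_eq_coe_iff.mpr ⟨l, hstay u hu.1 (by omega)⟩

theorem image_layer_schedule_climb {j : Fin n}
    (hacc : ∀ (l : Fin (m j)) N, ∃ s, N ≤ s ∧ q s j ∈ (G j).acc l) {t : ℕ} {l : Fin (m j)}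
    (ht : schedule G hm J q t = some ⟨j, l⟩) :
    ∃ s, t < s ∧ (Ico t s).image (fun u => layer (schedule G hm J q u)) = {(j : WithBot _)} ∧
      schedule G hm J q s = entryAbove hm J j := by
  obtain ⟨d, hd⟩ : ∃ d, m j = l + 1 + d := ⟨m j - (l + 1), by omega⟩
  induction d generalizing t l with
  | zero =>
    obtain ⟨s₀, hts₀, himg₀, hacc₀, hs₀⟩ := image_layer_schedule_wait (hacc l) ht
    refine ⟨s₀ + 1, by omega, himg₀, ?_⟩
    rw [schedule_succ, hs₀, schedStep, if_pos hacc₀, dif_neg (by omega)]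
  | succ d ih =>
    obtain ⟨s₀, hts₀, himg₀, hacc₀, hs₀⟩ := image_layer_schedule_wait (hacc l) ht
    obtain ⟨s, hs, himg, hexit⟩ := ih (t := s₀ + 1) (l := ⟨l + 1, by omega⟩)
      (by rw [schedule_succ, hs₀, schedStep, if_pos hacc₀, dif_pos (by omega)]) (by simp; omega)
    refine ⟨s, by omega, ?_, hexit⟩
    rw [← Ico_union_Ico_eq_Ico (b := s₀ + 1) (by omega) hs.le, image_union, himg₀, himg,
      union_self]

variable (hacc : ∀ j ∈ J, ∀ (l : Fin (m j)) N, ∃ s, N ≤ s ∧ q s j ∈ (G j).acc l)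
include hacc

theorem image_layer_schedule_traverse (x : WithBot (Fin n)) {t : ℕ}
    (ht : schedule G hm J q t = entryAbove hm J x) :
    ∃ k, t ≤ k ∧ schedule G hm J q k = none ∧
      (Ico t k).image (fun u => layer (schedule G hm J q u)) =
        (J.filter fun j : Fin n => x < j).image (↑) := by
  induction hcard : (J.filter fun j : Fin n => x < j).card using Nat.strong_induction_on
    generalizing x t with
  | _ N ih =>
  rcases entryAbove_eq x with ⟨he, hnone⟩ | ⟨j, hj, hxj, hmin, he⟩
  · refine ⟨t, le_rfl, ht.trans he, ?_⟩
    rw [Ico_self, image_empty, filter_false_of_mem hnone, image_empty]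
  · obtain ⟨s, hts, himg₁, hs⟩ := image_layer_schedule_climb (hacc j hj) (ht.trans he)
    have hsplit : J.filter (fun j' : Fin n => x < j') =
        insert j (J.filter fun j' : Fin n => (j : WithBot (Fin n)) < j') := by
      ext j'
      simp only [mem_filter, mem_insert]
      constructor
      · rintro ⟨hj', hxj'⟩
        rcases eq_or_ne j' j with rfl | hne
        · exact Or.inl rfl
        · exact Or.inr ⟨hj', WithBot.coe_lt_coe.mpr ((hmin j' hj' hxj').lt_of_ne hne.symm)⟩
      · rintro (rfl | ⟨hj', hjj'⟩)
        exacts [⟨hj, hxj⟩, ⟨hj', hxj.trans hjj'⟩]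
    have hlt : (J.filter fun j' : Fin n => (j : WithBot (Fin n)) < j').card < N := by
      rw [← hcard, hsplit, card_insert_of_notMem (by simp)]
      omega
    obtain ⟨k, hsk, hk, himg₂⟩ := ih _ hlt j hs rfl
    refine ⟨k, by omega, hk, ?_⟩
    rw [← Ico_union_Ico_eq_Ico hts.le hsk, image_union, himg₁, himg₂, hsplit, image_insert,
      insert_eq]

theorem exists_isFragment_schedule {i : ℕ} (hi : schedule G hm J q i = none) :
    ∃ k, IsFragment {none} (schedule G hm J q) i k ∧
      (Ico i k).image (fun u => layer (schedule G hm J q u)) = insert ⊥ (J.image (↑)) := by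
  obtain ⟨k, hik, hk, himg⟩ :=
    image_layer_schedule_traverse (hm := hm) hacc ⊥ (t := i + 1) (by rw [schedule_succ, hi]; rfl)
  rw [filter_true_of_mem fun j _ => WithBot.bot_lt_coe j] at himg
  refine ⟨k, ⟨by omega, hi, hk, fun u hiu huk hu => ?_⟩, ?_⟩
  · have : (⊥ : WithBot (Fin n)) ∈ J.image (↑) := himg ▸ mem_image.mpr
      ⟨u, mem_Ico.mpr ⟨hiu, huk⟩, by rw [Set.mem_singleton_iff.mp hu]; rfl⟩
    simp at this
  · rw [← insert_Ico_add_one_left_eq_Ico (by omega), image_insert, himg, hi]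
    rfl

end Schedule

section Completeness

variable {S A : Type*} {n : ℕ} {Qs : Fin n → Type*} {m : Fin n → ℕ} {T : LTS S A}
  {G : ∀ j, GBA (Qs j) A (m j)}

theorem LTS.IsTrace.exists_prodRun_runRewardIs (hm : ∀ j, 0 < m j) (hnb : ∀ j, (G j).NonBlocking)
    (rew : Fin n → ℕ) {τ : ℕ → S} (hτ : T.IsTrace τ) :
    ∃ ρ, IsProdRun T (BAut G rew) ρ ∧ RunRewardIs (ProdAcc T (BAut G rew)) ρ
      (ProdStepW T (BWeight rew) ρ) (TraceRew T G rew τ) := by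
  classical
  set J := univ.filter fun j => T.word τ ∈ (G j).Lang
  have hruns : ∀ j, ∃ r, (G j).IsRun (T.word τ) r ∧ (j ∈ J → (G j).IsAccepting r) := fun j => by
    by_cases hj : T.word τ ∈ (G j).Lang
    · obtain ⟨r, hr, hracc⟩ := hj
      exact ⟨r, hr, fun _ => hracc⟩
    · obtain ⟨r, hr⟩ := GBA.exists_isRun (hnb j) (T.word τ)
      exact ⟨r, hr, fun h => absurd (mem_filter.mp h).2 hj⟩
  choose r hr hracc using hruns
  set q : ℕ → ∀ j, Qs j := fun t j => r j t
  set c := schedule G hm J q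
  set ρ := fun t => (τ t, q t, c t)
  have hρ : IsProdRun T (BAut G rew) ρ :=
    ⟨by simp only [ρ, q, c, hτ.1, fun j => (hr j).1]; rfl,
      fun t => ⟨hτ.2 t, fun j => (hr j).2 t, compStep_schedStep _ _⟩⟩
  have hacc : ∀ j ∈ J, ∀ (l : Fin (m j)) N, ∃ s, N ≤ s ∧ q s j ∈ (G j).acc l := hracc
  have hweight : ∀ i k, IsFragment (ProdAcc T (BAut G rew)) ρ i k →
      SegWeight (ProdStepW T (BWeight rew) ρ) i k = TraceRew T G rew τ := fun i k hf => by
    obtain ⟨k', hf', himg⟩ := exists_isFragment_schedule hacc hf.2.1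
    obtain rfl : k = k' := IsFragment.right_unique (F := {none}) (ρ := c) hf hf'
    rw [hρ.segWeight_eq hf, himg, sum_layerRew_insert_bot, traceRew_eq_sum_filter]
  have hnone : ∀ N, ∃ i, N ≤ i ∧ c i = none := fun N => by
    induction N with
    | zero => exact ⟨0, le_rfl, rfl⟩
    | succ N ih =>
      obtain ⟨i, hi, hci⟩ := ih
      obtain ⟨k, hf, -⟩ := exists_isFragment_schedule hacc hci
      exact ⟨k, by have := hf.1; omega, hf.2.2.1⟩
  refine ⟨ρ, hρ, fun N => ?_, fun v hv => ⟨0, fun i k _ hf => (hweight i k hf).trans_ne hv.ne⟩⟩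
  obtain ⟨i, hi, hci⟩ := hnone N
  obtain ⟨k, hf, -⟩ := exists_isFragment_schedule hacc hci
  exact ⟨i, k, hi, hf, hweight i k hf⟩

end Completeness

theorem statement16_general {S A : Type*} [Finite S] {n : ℕ} {Qs : Fin n → Type*}
    [∀ j, Finite (Qs j)] {m : Fin n → ℕ} (hm : ∀ j, 0 < m j)
    (G : ∀ j, GBA (Qs j) A (m j)) (hnb : ∀ j, (G j).NonBlocking)
    (rew : Fin n → ℕ)
    (T : LTS S A) (hsucc : ∀ s, ∃ s', (s, s') ∈ T.trans) :
    ∃ Mx : ℕ,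
      (∃ τ, T.IsTrace τ ∧ TraceRew T G rew τ = Mx) ∧
      (∀ τ, T.IsTrace τ → TraceRew T G rew τ ≤ Mx) ∧
      (∃ ρ, IsProdRun T (BAut G rew) ρ ∧ IsProdAccepting T (BAut G rew) ρ ∧
        RunRewardIs (ProdAcc T (BAut G rew)) ρ (ProdStepW T (BWeight rew) ρ) Mx) ∧
      (∀ ρ cv, IsProdRun T (BAut G rew) ρ → IsProdAccepting T (BAut G rew) ρ →
        RunRewardIs (ProdAcc T (BAut G rew)) ρ (ProdStepW T (BWeight rew) ρ) cv →
        cv ≤ Mx) ∧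
      (∃ ρ, IsProdRun T (BAut G rew) ρ ∧ IsProdAccepting T (BAut G rew) ρ ∧
        IsPrefixSuffix (ProdAcc T (BAut G rew)) ρ ∧
        RunRewardIs (ProdAcc T (BAut G rew)) ρ (ProdStepW T (BWeight rew) ρ) Mx ∧
        T.IsTrace (fun i => (ρ i).1) ∧
        TraceRew T G rew (fun i => (ρ i).1) = Mx) := by
  obtain ⟨τ, hτ, hmax⟩ := T.exists_isTrace_forall_traceRew_le G rew hsucc
  obtain ⟨ρ, hρ, hC⟩ := hτ.exists_prodRun_runRewardIs hm hnb rew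
  obtain ⟨ρ', hρ', hps, hC'⟩ := hρ.exists_prefixSuffix hC
  refine ⟨_, ⟨τ, hτ, rfl⟩, hmax, ⟨ρ, hρ, hC.exists_mem_ge, hC⟩,
    fun ρ₁ _ hρ₁ _ hC₁ => (hρ₁.le_traceRew hC₁).trans (hmax _ hρ₁.isTrace),
    ρ', hρ', hC'.exists_mem_ge, hps, hC', hρ'.isTrace,
    (hmax _ hρ'.isTrace).antisymm (hρ'.le_traceRew hC')⟩

/-- soundness and completeness. The maximum of `Rew` over traces of `T`
and the maximum of `C` over accepting runs of `P = T ⊗ B` both exist and coincide,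
and some accepting run `ρ*` in prefix-suffix structure attains this common maximum,
its projection being a maximal-reward trace of `T`. -/
theorem statement16 {S A : Type*} [Finite S] [Finite A] {n : ℕ} {Qs : Fin n → Type*}
    [∀ j, Finite (Qs j)] {m : Fin n → ℕ} (hm : ∀ j, 0 < m j)
    (G : ∀ j, GBA (Qs j) A (m j)) (hnb : ∀ j, (G j).NonBlocking)
    (rew : Fin n → ℕ) (hrew : ∀ i j : Fin n, i ≤ j → rew j ≤ rew i)
    (T : LTS S A) (hsucc : ∀ s, ∃ s', (s, s') ∈ T.trans) :
    ∃ Mx : ℕ,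
      (∃ τ, T.IsTrace τ ∧ TraceRew T G rew τ = Mx) ∧
      (∀ τ, T.IsTrace τ → TraceRew T G rew τ ≤ Mx) ∧
      (∃ ρ, IsProdRun T (BAut G rew) ρ ∧ IsProdAccepting T (BAut G rew) ρ ∧
        RunRewardIs (ProdAcc T (BAut G rew)) ρ (ProdStepW T (BWeight rew) ρ) Mx) ∧
      (∀ ρ cv, IsProdRun T (BAut G rew) ρ → IsProdAccepting T (BAut G rew) ρ →
        RunRewardIs (ProdAcc T (BAut G rew)) ρ (ProdStepW T (BWeight rew) ρ) cv →
        cv ≤ Mx) ∧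
      (∃ ρ, IsProdRun T (BAut G rew) ρ ∧ IsProdAccepting T (BAut G rew) ρ ∧
        IsPrefixSuffix (ProdAcc T (BAut G rew)) ρ ∧
        RunRewardIs (ProdAcc T (BAut G rew)) ρ (ProdStepW T (BWeight rew) ρ) Mx ∧
        T.IsTrace (fun i => (ρ i).1) ∧
        TraceRew T G rew (fun i => (ρ i).1) = Mx) :=
  statement16_general hm G hnb rew T hsucc
end

section
/- Let B be the weighted Büchi automaton constructed from non-blocking generalized Büchi automata G_1, …, G_n with rewards rew_1 ≥ … ≥ rew_n, and let ρ = ρ_0 ρ_1 … be a run of B over an infinite word w. Suppose that for some j ∈ {1,…,n} and for every l ∈ {1,…,m_j}, there are infinitely many positions i such that the component of ρ_i is (j,l) and the component of ρ_{i+1} is different from (j,l). Then w ∈ L(G_j). -/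
/-- if a run `ρ` of `B` over `w` leaves component `(j,l)` infinitely often
for every `l ∈ {1,…,m_j}`, then `w ∈ L(G_j)`. -/
theorem statement17 {A : Type*} [Finite A] {n : ℕ} {Qs : Fin n → Type*}
    [∀ j, Finite (Qs j)] {m : Fin n → ℕ} (hm : ∀ j, 0 < m j)
    (G : ∀ j, GBA (Qs j) A (m j)) (hnb : ∀ j, (G j).NonBlocking)
    (rew : Fin n → ℕ) (hrew : ∀ i j : Fin n, i ≤ j → rew j ≤ rew i)
    (w : ℕ → A) (ρ : ℕ → (∀ j, Qs j) × BComp n m)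
    (hrun : (BAut G rew).IsRun w ρ) (j : Fin n)
    (h : ∀ l : Fin (m j), ∀ N, ∃ i, N ≤ i ∧
      (ρ i).2 = some ⟨j, l⟩ ∧ (ρ (i + 1)).2 ≠ some ⟨j, l⟩) :
    w ∈ (G j).Lang := by
  refine ⟨fun i => (ρ i).1 j, ⟨?_, fun i => (hrun.2 i).1 j⟩, ?_⟩
  · show (ρ 0).1 j = _; rw [hrun.1]; rfl
  · intro l N
    obtain ⟨i, hN, hc, hc'⟩ := h l N
    refine ⟨i, hN, ?_⟩
    show (ρ i).1 j ∈ _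
    have hstep : CompStep G (ρ i).1 (ρ i).2 (ρ (i+1)).2 := (hrun.2 i).2
    rw [hc] at hstep
    rcases hcomp : (ρ (i + 1)).2 with _ | ⟨j', l'⟩ <;> rw [hcomp] at hstep
    · exact hstep.2
    · rcases hstep with ⟨hj, hl, _⟩ | ⟨hj, hl, hacc⟩ | ⟨_, _, _, hacc⟩
      · exfalso; apply hc'
        rw [hcomp]
        subst hj
        exact congrArg some (congrArg _ (Fin.ext hl))
      · exact hacc
      · exact hacc
end

section
/- Let T = (S, s_init, R, L) be a labeled transition system in which every state has an R-successor, let B be the weighted Büchi automaton constructed from non-blocking generalized Büchi automata G_1, …, G_n with rewards rew_1 ≥ … ≥ rew_n, and let P = T ⊗ B. Then there exist a finite path p_0 p_1 … p_l in P with p_0 the initial state of P, and a finite cycle c = p_{l+1} p_{l+2} … p_m p_{l+1} in P with (p_l, p_{l+1}) ∈ δ_P and p_{l+1} ∈ F_P, such that every fragment of c except possibly the first has total weight 0, and the infinite sequence α(p_0 … p_l) · (α(c))^ω is a trace of T whose reward Rew is maximal among all traces of T. -/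
/-- An arbitrary run of a non-blocking GBA on a word, by dependent choice. -/
noncomputable def gbaAnyRun {Q A : Type*} {m : ℕ} (M : GBA Q A m)
    (h : M.NonBlocking) (w : ℕ → A) : ℕ → Q
  | 0 => M.init
  | i + 1 => (h (gbaAnyRun M h w i) (w i)).choose

lemma gbaAnyRun_isRun {Q A : Type*} {m : ℕ} (M : GBA Q A m)
    (h : M.NonBlocking) (w : ℕ → A) : M.IsRun w (gbaAnyRun M h w) :=
  ⟨rfl, fun i => (h (gbaAnyRun M h w i) (w i)).choose_spec⟩

/-- An arbitrary trace of an LTS in which every state has a successor. -/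
noncomputable def ltsAnyTrace {S A : Type*} (T : LTS S A)
    (h : ∀ s, ∃ s', (s, s') ∈ T.trans) : ℕ → S
  | 0 => T.init
  | i + 1 => (h (ltsAnyTrace T h i)).choose

lemma ltsAnyTrace_isTrace {S A : Type*} (T : LTS S A)
    (h : ∀ s, ∃ s', (s, s') ∈ T.trans) : T.IsTrace (ltsAnyTrace T h) :=
  ⟨rfl, fun i => (h (ltsAnyTrace T h i)).choose_spec⟩

/-- Successor modulo `len`. -/
lemma mod_succ_aux (len a : ℕ) (h : 0 < len) :
    ((a + 1) % len = a % len + 1 ∧ a % len + 1 < len) ∨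
      ((a + 1) % len = 0 ∧ a % len + 1 = len) := by
  rcases lt_or_ge (a % len + 1) len with h1 | h1
  · refine Or.inl ⟨?_, h1⟩
    conv_lhs => rw [← Nat.div_add_mod a len]
    rw [Nat.add_assoc, Nat.mul_add_mod, Nat.mod_eq_of_lt h1]
  · have h2 : a % len + 1 = len := by
      have := Nat.mod_lt a h
      omega
    refine Or.inr ⟨?_, h2⟩
    conv_lhs => rw [← Nat.div_add_mod a len]
    rw [Nat.add_assoc, Nat.mul_add_mod, h2, Nat.mod_self]

/-- there exist a finite path from the initial state of `P = T ⊗ B` and a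
finite cycle through an accepting state, all of whose fragments except possibly the
first have weight `0`, whose projection `α(prefix)·(α(cycle))^ω` is a maximal-reward
trace of `T`. -/
theorem statement18 {S A : Type*} [Finite S] [Finite A] {n : ℕ} {Qs : Fin n → Type*}
    [∀ j, Finite (Qs j)] {m : Fin n → ℕ} (hm : ∀ j, 0 < m j)
    (G : ∀ j, GBA (Qs j) A (m j)) (hnb : ∀ j, (G j).NonBlocking)
    (rew : Fin n → ℕ) (hrew : ∀ i j : Fin n, i ≤ j → rew j ≤ rew i)
    (T : LTS S A) (hsucc : ∀ s, ∃ s', (s, s') ∈ T.trans) :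
    ∃ (l : ℕ) (p : ℕ → S × ((∀ j, Qs j) × BComp n m))
      (len : ℕ) (q : ℕ → S × ((∀ j, Qs j) × BComp n m)),
      p 0 = (T.init, (BAut G rew).init) ∧
      IsFinPath (ProdTrans T (BAut G rew)) p l ∧
      0 < len ∧ q len = q 0 ∧
      IsFinPath (ProdTrans T (BAut G rew)) q len ∧
      (p l, q 0) ∈ ProdTrans T (BAut G rew) ∧
      q 0 ∈ ProdAcc T (BAut G rew) ∧
      (∀ i k', IsCycFrag (ProdAcc T (BAut G rew)) q len i k' → 0 < i →
        SegWeight (ProdStepW T (BWeight rew) q) i k' = 0) ∧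
      T.IsTrace (fun i => if i ≤ l then (p i).1 else (q ((i - (l + 1)) % len)).1) ∧
      (∀ τ, T.IsTrace τ → TraceRew T G rew τ ≤
        TraceRew T G rew
          (fun i => if i ≤ l then (p i).1 else (q ((i - (l + 1)) % len)).1)) := by
  classical
  -- A trace of maximal reward exists.
  set Rset : Set ℕ := {c | ∃ τ, T.IsTrace τ ∧ TraceRew T G rew τ = c} with hRset
  have hne : Rset.Nonempty := ⟨_, ltsAnyTrace T hsucc, ltsAnyTrace_isTrace T hsucc, rfl⟩
  have hbdd : BddAbove Rset := by
    refine ⟨∑ j, rew j, ?_⟩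
    rintro c ⟨τ, _, rfl⟩
    refine Finset.sum_le_sum fun j _ => ?_
    split <;> simp
  obtain ⟨τs, hτs, hcs⟩ := Nat.sSup_mem hne hbdd
  have hub : ∀ τ, T.IsTrace τ → TraceRew T G rew τ ≤ sSup Rset :=
    fun τ h => le_csSup hbdd ⟨τ, h, rfl⟩
  set w : ℕ → A := T.word τs with hw
  -- For each j, a run of G j over w, accepting when w ∈ L(G j).
  have hρex : ∀ j, ∃ ρ, (G j).IsRun w ρ ∧ (w ∈ (G j).Lang → (G j).IsAccepting ρ) := by
    intro j
    by_cases hj : w ∈ (G j).Lang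
    · obtain ⟨ρ, h1, h2⟩ := hj
      exact ⟨ρ, h1, fun _ => h2⟩
    · exact ⟨_, gbaAnyRun_isRun (G j) (hnb j) w, fun h => absurd h hj⟩
  choose ρ hρrun hρacc using hρex
  -- Pigeonhole: a product state visited infinitely often.
  set X : ℕ → S × (∀ j, Qs j) := fun i => (τs i, fun j => ρ j i) with hX
  obtain ⟨y, hy⟩ := Finite.exists_infinite_fiber X
  have hyinf : ∀ N, ∃ i, N ≤ i ∧ X i = y := by
    intro N
    obtain ⟨i, hi, hNi⟩ := (Set.infinite_coe_iff.mp hy).exists_gt N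
    exact ⟨i, le_of_lt hNi, hi⟩
  obtain ⟨i0, hi0_1, hXi0⟩ := hyinf 1
  -- Visit times of the acceptance sets after i0.
  have htex : ∀ s : Σ j : Fin n, Fin (m j), ∃ t, i0 ≤ t ∧
      (w ∈ (G s.1).Lang → ρ s.1 t ∈ (G s.1).acc s.2) := by
    intro s
    by_cases hj : w ∈ (G s.1).Lang
    · obtain ⟨t, ht1, ht2⟩ := hρacc s.1 hj s.2 i0
      exact ⟨t, ht1, fun _ => ht2⟩
    · exact ⟨i0, le_rfl, fun h => absurd h hj⟩
  choose tv htv1 htv2 using htex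
  obtain ⟨i1, hi1N, hXi1⟩ := hyinf
    ((Finset.univ.sup fun s : Σ j : Fin n, Fin (m j) => tv s + 1) ⊔ (i0 + 1))
  have hi0i1 : i0 < i1 := lt_of_lt_of_le (Nat.lt_succ_self i0) (le_trans le_sup_right hi1N)
  have htv_lt : ∀ s, tv s < i1 := by
    intro s
    have h1 : tv s + 1 ≤ i1 :=
      le_trans (le_trans (Finset.le_sup (f := fun s => tv s + 1) (Finset.mem_univ s))
        le_sup_left) hi1N
    omega
  have hXX : X i1 = X i0 := hXi1.trans hXi0.symm
  have hτeq : τs i1 = τs i0 := congrArg Prod.fst hXX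
  have hρeq : ∀ j, ρ j i1 = ρ j i0 := fun j => congrFun (congrArg Prod.snd hXX) j
  set l : ℕ := i0 - 1 with hldef
  set len : ℕ := i1 - i0 with hlendef
  have hl1 : l + 1 = i0 := by omega
  have hlen : 0 < len := by omega
  have hi0len : i0 + len = i1 := by omega
  set φ : ℕ → ℕ := fun i => if i ≤ l then i else i0 + (i - (l + 1)) % len with hφ
  have hstep : ∀ i, φ (i + 1) = φ i + 1 ∨ (φ i + 1 = i1 ∧ φ (i + 1) = i0) := by
    intro i
    by_cases h1 : i + 1 ≤ l
    · left
      simp only [hφ, if_pos h1, if_pos (Nat.le_of_succ_le h1)]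
    by_cases h2 : i ≤ l
    · left
      have hil : i = l := by omega
      simp only [hφ, if_neg h1, if_pos h2, hil]
      rw [show l + 1 - (l + 1) = 0 from by omega]
      simp [hl1]
    · have h3 : ¬ i + 1 ≤ l := by omega
      have hii0 : i0 ≤ i := by omega
      have e1 : i + 1 - (l + 1) = (i - (l + 1)) + 1 := by omega
      simp only [hφ, if_neg h1, if_neg h2, if_neg h3, e1]
      rcases mod_succ_aux len (i - (l + 1)) hlen with ⟨ha, _⟩ | ⟨ha, hb⟩
      · left
        rw [ha]
        omega
      · right
        rw [ha]
        constructor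
        · omega
        · omega
  have hφ0 : φ 0 = 0 := if_pos (Nat.zero_le l)
  -- the looped trace is a trace of T
  have hTstep : ∀ i, (τs (φ i), τs (φ (i + 1))) ∈ T.trans := by
    intro i
    rcases hstep i with h | ⟨h1, h2⟩
    · rw [h]
      exact hτs.2 (φ i)
    · have h3 := hτs.2 (φ i)
      rw [h1] at h3
      rw [h2, ← hτeq]
      exact h3
  have hGstep : ∀ j i, (ρ j (φ i), w (φ i), ρ j (φ (i + 1))) ∈ (G j).trans := by
    intro j i
    rcases hstep i with h | ⟨h1, h2⟩
    · rw [h]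
      exact (hρrun j).2 (φ i)
    · have h3 := (hρrun j).2 (φ i)
      rw [h1] at h3
      rw [h2, ← hρeq j]
      exact h3
  -- key language claim
  have hLang : ∀ j, w ∈ (G j).Lang → T.word (fun i => τs (φ i)) ∈ (G j).Lang := by
    intro j hj
    refine ⟨fun i => ρ j (φ i), ⟨?_, fun i => hGstep j i⟩, ?_⟩
    · show ρ j (φ 0) = _
      rw [hφ0]
      exact (hρrun j).1
    intro l' N
    have ht1 := htv1 ⟨j, l'⟩
    have ht2 := htv2 ⟨j, l'⟩ hj
    have ht3 := htv_lt ⟨j, l'⟩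
    refine ⟨tv ⟨j, l'⟩ + N * len, ?_, ?_⟩
    · calc N ≤ N * len := Nat.le_mul_of_pos_right N hlen
        _ ≤ tv ⟨j, l'⟩ + N * len := Nat.le_add_left _ _
    · have hgt : ¬ tv ⟨j, l'⟩ + N * len ≤ l := by omega
      have e1 : tv ⟨j, l'⟩ + N * len - (l + 1) = (tv ⟨j, l'⟩ - i0) + N * len := by omega
      have e2 : ((tv ⟨j, l'⟩ - i0) + N * len) % len = tv ⟨j, l'⟩ - i0 := by
        rw [Nat.add_mul_mod_self_right]
        exact Nat.mod_eq_of_lt (by omega)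
      have e3 : φ (tv ⟨j, l'⟩ + N * len) = tv ⟨j, l'⟩ := by
        simp only [hφ, if_neg hgt, e1, e2]
        omega
      show ρ j (φ (tv ⟨j, l'⟩ + N * len)) ∈ (G j).acc l'
      rw [e3]
      exact ht2
  refine ⟨l, fun i => (τs i, (fun j => ρ j i, none)), len,
    fun t => (τs (i0 + t), (fun j => ρ j (i0 + t), none)), ?_, ?_, hlen, ?_, ?_, ?_, ?_, ?_, ?_, ?_⟩
  · -- initial state
    have h1 : (fun j => ρ j 0) = fun j => (G j).init := funext fun j => (hρrun j).1
    simp only [BAut, hτs.1, h1]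
  · -- prefix path
    intro t ht
    exact ⟨hτs.2 t, fun j => (hρrun j).2 t, trivial⟩
  · -- cycle closes
    have h1 : (fun j => ρ j (i0 + len)) = fun j => ρ j (i0 + 0) := by
      funext j
      rw [hi0len, hρeq j, Nat.add_zero]
    simp only [h1]
    rw [show i0 + len = i1 from hi0len, hτeq, Nat.add_zero]
  · -- cycle path
    intro t ht
    exact ⟨hτs.2 (i0 + t), fun j => (hρrun j).2 (i0 + t), trivial⟩
  · -- connecting transition
    have e : i0 + 0 = l + 1 := by omega
    show ((τs l, (fun j => ρ j l, none)),
      (τs (i0 + 0), (fun j => ρ j (i0 + 0), none))) ∈ ProdTrans T (BAut G rew)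
    rw [e]
    exact ⟨hτs.2 l, fun j => (hρrun j).2 l, trivial⟩
  · -- accepting
    exact rfl
  · -- fragment weights
    intro i k' _ _
    refine Finset.sum_eq_zero fun j' _ => rfl
  · -- trace of T
    have hform : (fun i => if i ≤ l then
        ((fun i => (τs i, ((fun j => ρ j i : ∀ j, Qs j), (none : BComp n m)))) i).1
        else ((fun t => (τs (i0 + t), ((fun j => ρ j (i0 + t) : ∀ j, Qs j),
          (none : BComp n m)))) ((i - (l + 1)) % len)).1) = fun i => τs (φ i) := by
      funext i
      by_cases h : i ≤ l <;> simp [hφ, h]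
    rw [hform]
    refine ⟨?_, hTstep⟩
    show τs (φ 0) = _
    rw [hφ0]
    exact hτs.1
  · -- maximality
    intro τ hτ
    have hform : (fun i => if i ≤ l then
        ((fun i => (τs i, ((fun j => ρ j i : ∀ j, Qs j), (none : BComp n m)))) i).1
        else ((fun t => (τs (i0 + t), ((fun j => ρ j (i0 + t) : ∀ j, Qs j),
          (none : BComp n m)))) ((i - (l + 1)) % len)).1) = fun i => τs (φ i) := by
      funext i
      by_cases h : i ≤ l <;> simp [hφ, h]
    rw [hform]
    refine le_trans (hub τ hτ) ?_
    rw [← hcs]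
    refine Finset.sum_le_sum fun j _ => ?_
    by_cases hj : T.word τs ∈ (G j).Lang
    · rw [if_pos hj, if_pos (hLang j hj)]
    · rw [if_neg hj]
      exact Nat.zero_le _
end
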